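/- arXiv:1908.08493 — 8 statements merged into one kernel-verified Lean document; each statement's English description precedes it below -/
import Mathlib

section
/- Let ℓ > 0, A_max > 0, V_max = √(ℓ·A_max) and h = 2·√(ℓ/A_max). For every p ∈ ℝ and every v ∈ [0, V_max], the constant acceleration a = (V_max − 2v)/h satisfies |a| ≤ A_max, the position after one time step equals p + h·v + (h²/2)·a = p + ℓ, and the velocity after one time step equals v + h·a = V_max − v, which again lies in the interval [0, V_max]. -/
/-!
With `h = 2√(ℓ/A_max)` and `V_max = √(ℓ A_max)` one has `h V_max = 2ℓ` and `h A_max = 2 V_max`.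
The acceleration `a = (V_max - 2v)/h` reflects the velocity `v ↦ V_max - v`, so the average velocity
over the step is `V_max / 2` and the displacement is `h V_max / 2 = ℓ`; and `|V_max - 2v| ≤ V_max`
gives `|a| ≤ V_max / h = A_max / 2`.
-/

open Set

lemma Real.sqrt_div_mul_sqrt_mul {a b : ℝ} (ha : 0 ≤ a) (hb : 0 < b) :
    √(a / b) * √(a * b) = a := by
  rw [← Real.sqrt_mul (div_nonneg ha hb.le)]
  have : a / b * (a * b) = a ^ 2 := by field_simp
  rw [this, Real.sqrt_sq ha]

lemma Real.sqrt_div_mul_self {a b : ℝ} (hb : 0 < b) : √(a / b) * b = √(a * b) := by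
  rw [← Real.sqrt_sq hb.le, ← Real.sqrt_mul' _ (sq_nonneg b), Real.sqrt_sq hb.le]
  field_simp

section ReflectingStep

variable {V v h : ℝ}

lemma abs_sub_two_mul_le (hv : v ∈ Icc 0 V) : |V - 2 * v| ≤ V :=
  abs_le.mpr ⟨by linarith [hv.2], by linarith [hv.1]⟩

lemma abs_reflecting_accel_le (hh : 0 < h) (hv : v ∈ Icc 0 V) : |(V - 2 * v) / h| ≤ V / h := by
  rw [abs_div, abs_of_pos hh]
  exact div_le_div_of_nonneg_right (abs_sub_two_mul_le hv) hh.le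

lemma reflecting_step_position (p : ℝ) :
    p + h * v + h ^ 2 / 2 * ((V - 2 * v) / h) = p + h * V / 2 := by
  field_simp
  ring

lemma reflecting_step_velocity (hh : h ≠ 0) : v + h * ((V - 2 * v) / h) = V - v := by
  field_simp
  ring

end ReflectingStep

/-- one forward step along the path direction (x-coordinate of Lemma 1). -/
theorem stmt_0 (ℓ Amax Vmax h : ℝ) (hℓ : 0 < ℓ) (hA : 0 < Amax)
    (hV : Vmax = Real.sqrt (ℓ * Amax)) (hh : h = 2 * Real.sqrt (ℓ / Amax))
    (p v : ℝ) (hv : v ∈ Set.Icc (0 : ℝ) Vmax) :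
    |(Vmax - 2 * v) / h| ≤ Amax ∧
    p + h * v + h ^ 2 / 2 * ((Vmax - 2 * v) / h) = p + ℓ ∧
    v + h * ((Vmax - 2 * v) / h) = Vmax - v ∧
    Vmax - v ∈ Set.Icc (0 : ℝ) Vmax := by
  have h_pos : 0 < h := by rw [hh]; positivity
  have hV_pos : 0 < Vmax := by rw [hV]; positivity
  have h_mul_V : h * Vmax = 2 * ℓ := by
    rw [hh, hV, mul_assoc, Real.sqrt_div_mul_sqrt_mul hℓ.le hA]
  have h_mul_A : h * Amax = 2 * Vmax := by
    rw [hh, hV, mul_assoc, Real.sqrt_div_mul_self hA]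
  have V_div_h : Vmax / h ≤ Amax := by
    rw [div_le_iff₀ h_pos]
    linarith
  refine ⟨(abs_reflecting_accel_le h_pos hv).trans V_div_h, ?_,
    reflecting_step_velocity h_pos.ne', sub_mem_Icc_zero_iff_right.mpr hv⟩
  rw [reflecting_step_position p, h_mul_V]
  ring
end

section
/- (Lemma 1, axis-aligned form.) Let ℓ > 0, A_max > 0, V_max = √(ℓ·A_max), h = 2·√(ℓ/A_max). Let ϖ ∈ ℝ^d, let i be a coordinate index, and set ϖ' = ϖ + ℓ·e_i, so that ‖ϖ' − ϖ‖₂ = ℓ. Suppose p ∈ Ω(ϖ), ‖v‖_∞ ≤ V_max, and ⟨v, ϖ' − ϖ⟩ ≥ 0. Then there exists an acceleration a with ‖a‖_∞ ≤ A_max such that the next state p' = p + h·v + (h²/2)·a and v' = v + h·a satisfies p' ∈ Ω(ϖ'), ‖v'‖_∞ ≤ V_max, and ⟨v', ϖ' − ϖ⟩ ≥ 0. -/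
/-!
Work coordinate by coordinate and prescribe the new velocity `w` rather than the acceleration:
with `a = (w - u) / h` the velocity becomes `w` and the position advances by `h (u + w) / 2`,
and `|a| ≤ 2 V / h = A` as soon as `|u|, |w| ≤ V`. Off the axis of motion take `w = -V x / ℓ`,
which brings the offset `x` from the old centre to `h u / 2`; along the axis take
`w = V (ℓ - x) / (2ℓ) ∈ [0, V]`, which brings the offset from the new centre to
`(x - ℓ + h u) / 2`. Both land in `[-ℓ, ℓ]` because `h V = 2ℓ`.
-/

open scoped RealInnerProductSpace

section ConstantAccelerationStep

variable {ℓ V A h : ℝ}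

theorem abs_sub_div_le (hh : 0 < h) (hhA : h * A = 2 * V) {u w : ℝ} (hu : |u| ≤ V)
    (hw : |w| ≤ V) : |(w - u) / h| ≤ A := by
  rw [abs_div, abs_of_pos hh, div_le_iff₀ hh, mul_comm, hhA]
  linarith [abs_sub w u]

theorem velocity_step_of_target (hh : h ≠ 0) (u w : ℝ) : u + h * ((w - u) / h) = w := by
  field_simp
  ring

theorem position_step_of_target (x u w : ℝ) :
    x + h * u + h ^ 2 / 2 * ((w - u) / h) = x + h / 2 * (u + w) := by
  field_simp
  ring

theorem exists_accel_hold (hℓ : 0 < ℓ) (hh : 0 < h) (hhV : h * V = 2 * ℓ)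
    (hhA : h * A = 2 * V) {x u : ℝ} (hx : |x| ≤ ℓ) (hu : |u| ≤ V) :
    ∃ a, |a| ≤ A ∧ |x + h * u + h ^ 2 / 2 * a| ≤ ℓ ∧ |u + h * a| ≤ V := by
  set w := -(V / ℓ * x)
  have hV : 0 ≤ V := (abs_nonneg u).trans hu
  have hw : |w| ≤ V := by
    rw [abs_neg, abs_mul, abs_of_nonneg (by positivity)]
    calc V / ℓ * |x| ≤ V / ℓ * ℓ := by gcongr
      _ = V := div_mul_cancel₀ V hℓ.ne'
  refine ⟨(w - u) / h, abs_sub_div_le hh hhA hu hw, ?_, ?_⟩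
  · have hpos : x + h / 2 * (u + w) = h / 2 * u := by
      simp only [w]
      field_simp
      linear_combination (-x) * hhV
    rw [position_step_of_target, hpos, abs_mul, abs_of_pos (by positivity)]
    nlinarith
  · rwa [velocity_step_of_target hh.ne']

theorem exists_accel_advance (hℓ : 0 < ℓ) (hh : 0 < h) (hhV : h * V = 2 * ℓ)
    (hhA : h * A = 2 * V) {x u : ℝ} (hx : |x| ≤ ℓ) (hu₀ : 0 ≤ u) (hu : u ≤ V) :
    ∃ a, |a| ≤ A ∧ |x + h * u + h ^ 2 / 2 * a - ℓ| ≤ ℓ ∧ |u + h * a| ≤ V ∧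
      0 ≤ u + h * a := by
  set w := V / (2 * ℓ) * (ℓ - x)
  obtain ⟨hx₁, hx₂⟩ := abs_le.mp hx
  have hV : 0 ≤ V := hu₀.trans hu
  have hw₀ : 0 ≤ w := mul_nonneg (by positivity) (by linarith)
  have hw : w ≤ V := by
    calc w ≤ V / (2 * ℓ) * (2 * ℓ) := mul_le_mul_of_nonneg_left (by linarith) (by positivity)
      _ = V := div_mul_cancel₀ V (by positivity)
  refine ⟨(w - u) / h, abs_sub_div_le hh hhA (abs_le.mpr ⟨by linarith, hu⟩)
    (abs_le.mpr ⟨by linarith, hw⟩), ?_, ?_, ?_⟩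
  · have hpos : x + h / 2 * (u + w) - ℓ = (x - ℓ + h * u) / 2 := by
      simp only [w]
      field_simp
      linear_combination (ℓ - x) * hhV
    rw [position_step_of_target, hpos, abs_le]
    constructor <;> nlinarith
  · rw [velocity_step_of_target hh.ne', abs_of_nonneg hw₀]
    exact hw
  · rwa [velocity_step_of_target hh.ne']

end ConstantAccelerationStep

theorem two_mul_sqrt_div_mul_sqrt_mul {ℓ A : ℝ} (hℓ : 0 ≤ ℓ) (hA : 0 < A) :
    2 * √(ℓ / A) * √(ℓ * A) = 2 * ℓ := by
  rw [mul_assoc, ← Real.sqrt_mul (div_nonneg hℓ hA.le),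
    show ℓ / A * (ℓ * A) = ℓ ^ 2 by field_simp, Real.sqrt_sq hℓ]

theorem two_mul_sqrt_div_mul {ℓ A : ℝ} (hA : 0 < A) : 2 * √(ℓ / A) * A = 2 * √(ℓ * A) := by
  rw [mul_assoc, ← Real.sqrt_sq hA.le, ← Real.sqrt_mul' _ (sq_nonneg _), Real.sqrt_sq hA.le]
  congr 2
  field_simp

theorem inner_add_smul_single_sub_self {d : ℕ} (v ϖ : EuclideanSpace ℝ (Fin d)) (i : Fin d)
    (c : ℝ) : ⟪v, (ϖ + c • EuclideanSpace.single i (1 : ℝ)) - ϖ⟫ = c * v i := by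
  simp [real_inner_smul_right, EuclideanSpace.inner_single_right]

theorem stmt_2_general (d : ℕ) (ℓ Amax Vmax h : ℝ) (hℓ : 0 < ℓ) (hA : 0 < Amax)
    (hV : Vmax = Real.sqrt (ℓ * Amax)) (hh : h = 2 * Real.sqrt (ℓ / Amax))
    (ϖ p v : EuclideanSpace ℝ (Fin d)) (i : Fin d)
    (hp : ∀ j, |p j - ϖ j| ≤ ℓ)
    (hv : ∀ j, |v j| ≤ Vmax)
    (hdir : 0 ≤ ⟪v, (ϖ + ℓ • EuclideanSpace.single i (1 : ℝ)) - ϖ⟫) :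
    ∃ a : EuclideanSpace ℝ (Fin d),
      (∀ j, |a j| ≤ Amax) ∧
      (∀ j, |(p + h • v + (h ^ 2 / 2) • a) j -
              (ϖ + ℓ • EuclideanSpace.single i (1 : ℝ)) j| ≤ ℓ) ∧
      (∀ j, |(v + h • a) j| ≤ Vmax) ∧
      0 ≤ ⟪v + h • a, (ϖ + ℓ • EuclideanSpace.single i (1 : ℝ)) - ϖ⟫ := by
  have hh₀ : 0 < h := by rw [hh]; positivity
  have hhV : h * Vmax = 2 * ℓ := by
    rw [hh, hV]; exact two_mul_sqrt_div_mul_sqrt_mul hℓ.le hA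
  have hhA : h * Amax = 2 * Vmax := by
    rw [hh, hV]; exact two_mul_sqrt_div_mul hA
  rw [inner_add_smul_single_sub_self] at hdir
  have hvi : 0 ≤ v i := (mul_nonneg_iff_of_pos_left hℓ).mp hdir
  have coord : ∀ j, ∃ a : ℝ, |a| ≤ Amax ∧
      |p j + h * v j + h ^ 2 / 2 * a - (ϖ j + ℓ * EuclideanSpace.single i (1 : ℝ) j)|
        ≤ ℓ ∧
      |v j + h * a| ≤ Vmax ∧ (j = i → 0 ≤ v j + h * a) := by
    intro j
    rcases eq_or_ne j i with rfl | hji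
    · obtain ⟨a, ha, hpos, hvel, hdir'⟩ :=
        exists_accel_advance hℓ hh₀ hhV hhA (hp j) hvi (le_of_abs_le (hv j))
      refine ⟨a, ha, ?_, hvel, fun _ => hdir'⟩
      convert hpos using 2
      simp only [PiLp.single_eq_same, mul_one]
      ring
    · obtain ⟨a, ha, hpos, hvel⟩ := exists_accel_hold hℓ hh₀ hhV hhA (hp j) (hv j)
      refine ⟨a, ha, ?_, hvel, fun hij => absurd hij hji⟩
      convert hpos using 2
      simp only [ne_eq, hji, not_false_eq_true, PiLp.single_eq_of_ne, mul_zero, add_zero]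
      ring
  choose a ha hpos hvel hdir' using coord
  refine ⟨WithLp.toLp 2 a, ha, fun j => ?_, fun j => ?_, ?_⟩
  · simpa using hpos j
  · simpa using hvel j
  · rw [inner_add_smul_single_sub_self]
    exact mul_nonneg hℓ.le (by simpa using hdir' i rfl)

/-- Lemma 1, axis-aligned form. -/
theorem stmt_2 (d : ℕ) (hd : 1 ≤ d) (ℓ Amax Vmax h : ℝ) (hℓ : 0 < ℓ) (hA : 0 < Amax)
    (hV : Vmax = Real.sqrt (ℓ * Amax)) (hh : h = 2 * Real.sqrt (ℓ / Amax))
    (ϖ p v : EuclideanSpace ℝ (Fin d)) (i : Fin d)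
    (hp : ∀ j, |p j - ϖ j| ≤ ℓ)
    (hv : ∀ j, |v j| ≤ Vmax)
    (hdir : 0 ≤ ⟪v, (ϖ + ℓ • EuclideanSpace.single i (1 : ℝ)) - ϖ⟫) :
    ∃ a : EuclideanSpace ℝ (Fin d),
      (∀ j, |a j| ≤ Amax) ∧
      (∀ j, |(p + h • v + (h ^ 2 / 2) • a) j -
              (ϖ + ℓ • EuclideanSpace.single i (1 : ℝ)) j| ≤ ℓ) ∧
      (∀ j, |(v + h • a) j| ≤ Vmax) ∧
      0 ≤ ⟪v + h • a, (ϖ + ℓ • EuclideanSpace.single i (1 : ℝ)) - ϖ⟫ :=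
  stmt_2_general d ℓ Amax Vmax h hℓ hA hV hh ϖ p v i hp hv hdir
end

section
/- (Two-step corner maneuver, scalar version from the proof of Lemma 2.) Let ℓ > 0, A_max > 0, V_max = √(ℓ·A_max), h = 2·√(ℓ/A_max), and let α ≥ 1. Suppose p ∈ [−α·ℓ, α·ℓ], v ∈ [−α·V_max, α·V_max], and let V_f ∈ [0, V_max/α] be any desired final speed. Then there exist constant accelerations a₁ and a₂ with |a₁| ≤ α·A_max and |a₂| ≤ α·A_max such that, setting p₁ = p + h·v + (h²/2)·a₁, v₁ = v + h·a₁, p₂ = p₁ + h·v₁ + (h²/2)·a₂ and v₂ = v₁ + h·a₂, one has p₁ ∈ [−α·ℓ, α·ℓ], v₁ ∈ [−α·V_max, α·V_max], p₂ ∈ [0, ℓ], and v₂ = α·V_f. -/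
/-!
Steer through the intermediate velocity `w = -(p + h v / 2) / h`. Every constant acceleration
changing the velocity from `v` to `w` in time `h` moves the particle by `h (v + w) / 2`, so this
choice puts it at `(p + h v / 2) / 2` after the first step and exactly at `h α V_f / 2 ∈ [0, ℓ]`
after the second. All bounds then reduce to `h V_max = 2ℓ` and `h A_max = 2 V_max`.
-/

section Kinematics

variable {h : ℝ}

theorem position_after_accel_to (hh : h ≠ 0) (p v w : ℝ) :
    p + h * v + h ^ 2 / 2 * ((w - v) / h) = p + h * (v + w) / 2 := by
  rw [sq, mul_div_right_comm, mul_assoc, mul_div_cancel₀ _ hh]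
  ring

theorem velocity_after_accel_to (hh : h ≠ 0) (v w : ℝ) : v + h * ((w - v) / h) = w := by
  rw [mul_div_cancel₀ _ hh, add_sub_cancel]

theorem abs_accel_to_le (hh : 0 < h) {c v w : ℝ} (hv : |v| ≤ c) (hw : |w| ≤ c) :
    |(w - v) / h| ≤ 2 * c / h := by
  rw [abs_div, abs_of_pos hh]
  gcongr
  linarith [abs_sub w v]

end Kinematics

section Scales

variable {ℓ A : ℝ}

theorem two_sqrt_div_mul_sqrt_mul (hℓ : 0 ≤ ℓ) (hA : 0 < A) :
    2 * √(ℓ / A) * √(ℓ * A) = 2 * ℓ := by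
  rw [mul_assoc, ← Real.sqrt_mul (by positivity), show ℓ / A * (ℓ * A) = ℓ ^ 2 by field_simp,
    Real.sqrt_sq hℓ]

theorem two_sqrt_div_mul (hℓ : 0 ≤ ℓ) (hA : 0 < A) :
    2 * √(ℓ / A) * A = 2 * √(ℓ * A) := by
  rw [mul_assoc, ← Real.sqrt_sq (by positivity : 0 ≤ √(ℓ / A) * A), mul_pow,
    Real.sq_sqrt (by positivity), show ℓ / A * A ^ 2 = ℓ * A by field_simp]

end Scales

theorem two_step_maneuver {ℓ A V h α p v u : ℝ} (hh : 0 < h) (hhV : h * V = 2 * ℓ)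
    (hhA : h * A = 2 * V) (hα : 1 ≤ α) (hp : |p| ≤ α * ℓ) (hv : |v| ≤ α * V)
    (hu : u ∈ Set.Icc 0 V) :
    ∃ a₁ a₂ : ℝ, |a₁| ≤ α * A ∧ |a₂| ≤ α * A ∧
      p + h * v + h ^ 2 / 2 * a₁ ∈ Set.Icc (-(α * ℓ)) (α * ℓ) ∧
      v + h * a₁ ∈ Set.Icc (-(α * V)) (α * V) ∧
      (p + h * v + h ^ 2 / 2 * a₁) + h * (v + h * a₁) + h ^ 2 / 2 * a₂ ∈ Set.Icc 0 ℓ ∧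
      (v + h * a₁) + h * a₂ = u := by
  set q := p + h * v / 2
  have hq : |q| ≤ 2 * (α * ℓ) := by
    have : |h * v| ≤ 2 * (α * ℓ) := by
      rw [abs_mul, abs_of_pos hh]
      linear_combination mul_le_mul_of_nonneg_left hv hh.le + α * hhV
    linarith [abs_add_le p (h * v / 2), abs_div (h * v) 2, abs_two (α := ℝ)]
  set w := -q / h
  have hw : |w| ≤ α * V := by
    rw [abs_div, abs_neg, abs_of_pos hh, div_le_iff₀ hh]
    linear_combination hq - α * hhV
  have hu_abs : |u| ≤ α * V := by
    rw [abs_of_nonneg hu.1]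
    exact hu.2.trans (le_mul_of_one_le_left (hu.1.trans hu.2) hα)
  have hAccel : 2 * (α * V) / h = α * A := by
    rw [div_eq_iff hh.ne']
    linear_combination -α * hhA
  refine ⟨(w - v) / h, (u - w) / h, hAccel ▸ abs_accel_to_le hh hv hw,
    hAccel ▸ abs_accel_to_le hh hw hu_abs, ?_⟩
  rw [position_after_accel_to hh.ne', velocity_after_accel_to hh.ne',
    position_after_accel_to hh.ne', velocity_after_accel_to hh.ne']
  have hp₁ : p + h * (v + w) / 2 = q / 2 := by
    simp only [q, w]
    field_simp
    ring
  have hp₂ : q / 2 + h * (w + u) / 2 = h * u / 2 := by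
    simp only [w]
    field_simp
    ring
  rw [hp₁, hp₂]
  refine ⟨abs_le.mp ?_, abs_le.mp hw, ⟨by positivity [hu.1], ?_⟩, rfl⟩
  · rw [abs_div, abs_two]
    linarith
  · linarith [mul_le_mul_of_nonneg_left hu.2 hh.le]

/-- two-step corner maneuver, scalar version (proof of Lemma 2). -/
theorem stmt_3 (ℓ Amax Vmax h : ℝ) (hℓ : 0 < ℓ) (hA : 0 < Amax)
    (hV : Vmax = Real.sqrt (ℓ * Amax)) (hh : h = 2 * Real.sqrt (ℓ / Amax))
    (α : ℝ) (hα : 1 ≤ α)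
    (p v Vf : ℝ)
    (hp : p ∈ Set.Icc (-(α * ℓ)) (α * ℓ))
    (hv : v ∈ Set.Icc (-(α * Vmax)) (α * Vmax))
    (hVf : Vf ∈ Set.Icc (0 : ℝ) (Vmax / α)) :
    ∃ a₁ a₂ : ℝ, |a₁| ≤ α * Amax ∧ |a₂| ≤ α * Amax ∧
      p + h * v + h ^ 2 / 2 * a₁ ∈ Set.Icc (-(α * ℓ)) (α * ℓ) ∧
      v + h * a₁ ∈ Set.Icc (-(α * Vmax)) (α * Vmax) ∧
      (p + h * v + h ^ 2 / 2 * a₁) + h * (v + h * a₁) + h ^ 2 / 2 * a₂ ∈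
        Set.Icc (0 : ℝ) ℓ ∧
      (v + h * a₁) + h * a₂ = α * Vf := by
  have hh₀ : 0 < h := by rw [hh]; positivity
  have hhV : h * Vmax = 2 * ℓ := by rw [hh, hV]; exact two_sqrt_div_mul_sqrt_mul hℓ.le hA
  have hhA : h * Amax = 2 * Vmax := by rw [hh, hV]; exact two_sqrt_div_mul hℓ.le hA
  have hαVf : α * Vf ∈ Set.Icc 0 Vmax :=
    ⟨by positivity [hVf.1], (le_div_iff₀' (by linarith)).mp hVf.2⟩
  exact two_step_maneuver hh₀ hhV hhA hα (abs_le.mpr hp) (abs_le.mpr hv) hαVf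
end

section
/- (Lemma 2, axis-aligned form.) Let ℓ > 0, A_max > 0, V_max = √(ℓ·A_max), h = 2·√(ℓ/A_max). Let ϖ ∈ ℝ^d, let j be a coordinate index, and consider the repeated waypoint pair ϖ[k] = ϖ[k+1] = ϖ followed by ϖ[k+2] = ϖ + ℓ·e_j. Suppose p ∈ Ω(ϖ) and ‖v‖_∞ ≤ V_max. Then there exist accelerations a₁ and a₂ with ‖a₁‖_∞ ≤ A_max and ‖a₂‖_∞ ≤ A_max such that, setting p₁ = p + h·v + (h²/2)·a₁, v₁ = v + h·a₁, p₂ = p₁ + h·v₁ + (h²/2)·a₂ and v₂ = v₁ + h·a₂, one has p₁ ∈ Ω(ϖ), ‖v₁‖_∞ ≤ V_max, p₂ ∈ Ω(ϖ + ℓ·e_j), ‖v₂‖_∞ ≤ V_max, and ⟨v₂, (ϖ + ℓ·e_j) − ϖ⟩ ≥ 0. -/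
open scoped RealInnerProductSpace

/-!
Both steps are spent braking. With `w = (p - ϖ)/h + v/2`, which satisfies `|wᵢ| ≤ V_max` because
`h·V_max = 2ℓ`, the acceleration `a₁ = -(w + v)/h` leads to position `ϖ + (h/2)·w` with velocity
`-w`, and `a₂ = w/h` then stops the particle exactly at `ϖ`. Both accelerations are bounded by
`2·V_max/h = A_max`. The point `ϖ` lies on the boundary of `Ω(ϖ + ℓ·e_j)`, and the final velocity
is zero.
-/

theorem Real.sqrt_div_mul_sqrt_mul_s4 {x y : ℝ} (hx : 0 ≤ x) (hy : 0 < y) :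
    √(x / y) * √(x * y) = x := by
  have hxy : x / y * (x * y) = x * x := by field_simp
  rw [← Real.sqrt_mul (div_nonneg hx hy.le), hxy, Real.sqrt_mul_self hx]

theorem Real.sqrt_div_mul_of_nonneg (x : ℝ) {y : ℝ} (hy : 0 ≤ y) : √(x / y) * y = √(x * y) := by
  rw [Real.sqrt_div' x hy, Real.sqrt_mul' x hy, div_mul_eq_mul_div, mul_div_assoc, Real.div_sqrt]

theorem stepSize_relations {ℓ Amax Vmax h : ℝ} (hℓ : 0 < ℓ) (hA : 0 < Amax)
    (hV : Vmax = √(ℓ * Amax)) (hh : h = 2 * √(ℓ / Amax)) :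
    0 < h ∧ h * Vmax = 2 * ℓ ∧ h * Amax = 2 * Vmax := by
  subst hV hh
  refine ⟨by positivity, ?_, ?_⟩
  · rw [mul_assoc, Real.sqrt_div_mul_sqrt_mul_s4 hℓ.le hA]
  · rw [mul_assoc, Real.sqrt_div_mul_of_nonneg ℓ hA.le]

section Braking

variable {E : Type*} [AddCommGroup E] [Module ℝ E] {h : ℝ}

theorem braking_position₁ (hh : h ≠ 0) {ϖ p v w : E} (hw : h⁻¹ • (p - ϖ) + (1 / 2 : ℝ) • v = w) :
    p + h • v + (h ^ 2 / 2) • (-h⁻¹ • (w + v)) = ϖ + (h / 2) • w := by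
  subst hw
  match_scalars <;> grind

theorem braking_velocity₁ (hh : h ≠ 0) (v w : E) : v + h • (-h⁻¹ • (w + v)) = -w := by
  match_scalars <;> grind

theorem braking_position₂ (hh : h ≠ 0) (ϖ w : E) :
    ϖ + (h / 2) • w + h • -w + (h ^ 2 / 2) • (h⁻¹ • w) = ϖ := by
  match_scalars <;> grind

theorem braking_velocity₂ (hh : h ≠ 0) (w : E) : -w + h • (h⁻¹ • w) = 0 := by
  rw [smul_smul, mul_inv_cancel₀ hh, one_smul, neg_add_cancel]

end Braking

theorem abs_inv_mul_add_half_le {ℓ V h x u : ℝ} (hh : 0 < h) (hhV : h * V = 2 * ℓ)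
    (hx : |x| ≤ ℓ) (hu : |u| ≤ V) : |h⁻¹ * x + 1 / 2 * u| ≤ V := by
  calc |h⁻¹ * x + 1 / 2 * u| ≤ h⁻¹ * |x| + 1 / 2 * |u| := by
        simpa [abs_mul, abs_of_pos hh] using abs_add_le (h⁻¹ * x) (1 / 2 * u)
    _ ≤ h⁻¹ * ℓ + 1 / 2 * V := by gcongr
    _ = V := by field_simp; linarith

theorem abs_inv_mul_le {A V h y : ℝ} (hh : 0 < h) (hhA : h * A = 2 * V) (hy : |y| ≤ 2 * V) :
    |h⁻¹ * y| ≤ A := by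
  rwa [abs_mul, abs_inv, abs_of_pos hh, inv_mul_le_iff₀ hh, hhA]

theorem stmt_4_general (d : ℕ) (ℓ Amax Vmax h : ℝ) (hℓ : 0 < ℓ) (hA : 0 < Amax)
    (hV : Vmax = Real.sqrt (ℓ * Amax)) (hh : h = 2 * Real.sqrt (ℓ / Amax))
    (ϖ p v : EuclideanSpace ℝ (Fin d)) (j : Fin d)
    (hp : ∀ i, |p i - ϖ i| ≤ ℓ)
    (hv : ∀ i, |v i| ≤ Vmax) :
    ∃ a₁ a₂ : EuclideanSpace ℝ (Fin d),
      (∀ i, |a₁ i| ≤ Amax) ∧ (∀ i, |a₂ i| ≤ Amax) ∧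
      (∀ i, |(p + h • v + (h ^ 2 / 2) • a₁) i - ϖ i| ≤ ℓ) ∧
      (∀ i, |(v + h • a₁) i| ≤ Vmax) ∧
      (∀ i, |((p + h • v + (h ^ 2 / 2) • a₁) + h • (v + h • a₁) + (h ^ 2 / 2) • a₂) i -
              (ϖ + ℓ • EuclideanSpace.single j (1 : ℝ)) i| ≤ ℓ) ∧
      (∀ i, |((v + h • a₁) + h • a₂) i| ≤ Vmax) ∧
      0 ≤ ⟪(v + h • a₁) + h • a₂,
            (ϖ + ℓ • EuclideanSpace.single j (1 : ℝ)) - ϖ⟫ := by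
  obtain ⟨hh0, hhV, hhA⟩ := stepSize_relations hℓ hA hV hh
  set w := h⁻¹ • (p - ϖ) + (1 / 2 : ℝ) • v with hw
  have hwV : ∀ i, |w i| ≤ Vmax := fun i => abs_inv_mul_add_half_le hh0 hhV (hp i) (hv i)
  refine ⟨-h⁻¹ • (w + v), h⁻¹ • w, ?_, ?_, ?_, ?_, ?_, ?_, ?_⟩ <;>
    simp only [braking_position₁ hh0.ne' hw.symm, braking_velocity₁ hh0.ne',
      braking_position₂ hh0.ne', braking_velocity₂ hh0.ne']
  · intro i
    rw [PiLp.smul_apply, PiLp.add_apply, smul_eq_mul, neg_mul, abs_neg]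
    exact abs_inv_mul_le hh0 hhA ((abs_add_le (w i) (v i)).trans (by linarith [hwV i, hv i]))
  · intro i
    exact abs_inv_mul_le (y := w i) hh0 hhA (by linarith [hwV i, abs_nonneg (w i)])
  · intro i
    rw [PiLp.add_apply, add_sub_cancel_left, PiLp.smul_apply, smul_eq_mul, abs_mul,
      abs_of_pos (half_pos hh0)]
    nlinarith [hwV i]
  · simpa using hwV
  · intro i
    rw [PiLp.add_apply, sub_add_cancel_left, abs_neg, PiLp.smul_apply, smul_eq_mul, abs_mul,
      abs_of_pos hℓ, PiLp.single_apply]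
    split_ifs <;> simp [hℓ.le]
  · simpa using fun _ => hV ▸ Real.sqrt_nonneg _
  · simp

/-- Lemma 2, axis-aligned form (repeated waypoint followed by a
step of length ℓ along the coordinate direction e_j). -/
theorem stmt_4 (d : ℕ) (hd : 1 ≤ d) (ℓ Amax Vmax h : ℝ) (hℓ : 0 < ℓ) (hA : 0 < Amax)
    (hV : Vmax = Real.sqrt (ℓ * Amax)) (hh : h = 2 * Real.sqrt (ℓ / Amax))
    (ϖ p v : EuclideanSpace ℝ (Fin d)) (j : Fin d)
    (hp : ∀ i, |p i - ϖ i| ≤ ℓ)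
    (hv : ∀ i, |v i| ≤ Vmax) :
    ∃ a₁ a₂ : EuclideanSpace ℝ (Fin d),
      (∀ i, |a₁ i| ≤ Amax) ∧ (∀ i, |a₂ i| ≤ Amax) ∧
      (∀ i, |(p + h • v + (h ^ 2 / 2) • a₁) i - ϖ i| ≤ ℓ) ∧
      (∀ i, |(v + h • a₁) i| ≤ Vmax) ∧
      (∀ i, |((p + h • v + (h ^ 2 / 2) • a₁) + h • (v + h • a₁) + (h ^ 2 / 2) • a₂) i -
              (ϖ + ℓ • EuclideanSpace.single j (1 : ℝ)) i| ≤ ℓ) ∧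
      (∀ i, |((v + h • a₁) + h • a₂) i| ≤ Vmax) ∧
      0 ≤ ⟪(v + h • a₁) + h • a₂,
            (ϖ + ℓ • EuclideanSpace.single j (1 : ℝ)) - ϖ⟫ :=
  stmt_4_general d ℓ Amax Vmax h hℓ hA hV hh ϖ p v j hp hv
end

section
/- (Lemma 3, scalar version.) Let ℓ > 0, A_max > 0, V_max = √(ℓ·A_max), h = 2·√(ℓ/A_max). Suppose p₀, v₀, a are real numbers with |p₀| ≤ ℓ, |v₀| ≤ V_max, |a| ≤ A_max, and suppose the state after one step satisfies |p₀ + h·v₀ + (h²/2)·a| ≤ ℓ and |v₀ + h·a| ≤ V_max. Then for every t ∈ [0, h], the continuous position satisfies |p₀ + t·v₀ + (t²/2)·a| ≤ (3/2)·ℓ. -/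
/-!
On `[0, h]` the trajectory `p(t) = p₀ + t v₀ + t²/2 a` is the chord through `p(0)` and `p(h)`
plus the error term `t (t - h)/2 · a`. The chord stays between its endpoint values, which are
bounded by `ℓ`, and `|t (t - h)| ≤ h²/4` bounds the error by `h² A_max / 8 = ℓ / 2`.
-/

lemma abs_convex_comb_le {x y s L : ℝ} (hs₀ : 0 ≤ s) (hs₁ : s ≤ 1) (hx : |x| ≤ L)
    (hy : |y| ≤ L) : |(1 - s) * x + s * y| ≤ L := by
  have hs₁' : 0 ≤ 1 - s := sub_nonneg.2 hs₁
  calc |(1 - s) * x + s * y| ≤ (1 - s) * |x| + s * |y| := by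
        refine (abs_add_le _ _).trans_eq ?_
        rw [abs_mul, abs_mul, abs_of_nonneg hs₁', abs_of_nonneg hs₀]
    _ ≤ (1 - s) * L + s * L := by gcongr
    _ = L := by ring

lemma abs_mul_sub_le_sq_div_four {t h : ℝ} (ht₀ : 0 ≤ t) (hth : t ≤ h) :
    |t * (t - h)| ≤ h ^ 2 / 4 := by
  rw [abs_mul, abs_of_nonneg ht₀, abs_of_nonpos (sub_nonpos.2 hth)]
  nlinarith [sq_nonneg (t - h / 2)]

lemma quadratic_eq_chord_add {h : ℝ} (hh : h ≠ 0) (p v a t : ℝ) :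
    p + t * v + t ^ 2 / 2 * a =
      (1 - t / h) * p + t / h * (p + h * v + h ^ 2 / 2 * a) + t * (t - h) / 2 * a := by
  field_simp
  ring

lemma abs_quadratic_le_of_abs_endpoints_le {p v a h t L A : ℝ} (hh : 0 < h)
    (ht : t ∈ Set.Icc 0 h) (hp : |p| ≤ L) (hph : |p + h * v + h ^ 2 / 2 * a| ≤ L)
    (ha : |a| ≤ A) :
    |p + t * v + t ^ 2 / 2 * a| ≤ L + h ^ 2 / 8 * A := by
  obtain ⟨ht₀, hth⟩ := ht
  have hchord := abs_convex_comb_le (div_nonneg ht₀ hh.le) ((div_le_one hh).2 hth) hp hph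
  have herror : |t * (t - h) / 2 * a| ≤ h ^ 2 / 8 * A := by
    rw [abs_mul, abs_div, abs_two]
    calc |t * (t - h)| / 2 * |a| ≤ h ^ 2 / 4 / 2 * A := by
          gcongr
          exact abs_mul_sub_le_sq_div_four ht₀ hth
      _ = h ^ 2 / 8 * A := by ring
  rw [quadratic_eq_chord_add hh.ne']
  exact (abs_add_le _ _).trans (add_le_add hchord herror)

theorem stmt_6_general (ℓ Amax h : ℝ) (hℓ : 0 < ℓ) (hA : 0 < Amax)
    (hh : h = 2 * Real.sqrt (ℓ / Amax))
    (p₀ v₀ a : ℝ)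
    (hp : |p₀| ≤ ℓ) (ha : |a| ≤ Amax)
    (hp1 : |p₀ + h * v₀ + h ^ 2 / 2 * a| ≤ ℓ)
    (t : ℝ) (ht : t ∈ Set.Icc 0 h) :
    |p₀ + t * v₀ + t ^ 2 / 2 * a| ≤ 3 / 2 * ℓ := by
  have hh_pos : 0 < h := by rw [hh]; positivity
  have herror : h ^ 2 / 8 * Amax = ℓ / 2 := by
    rw [hh, mul_pow, Real.sq_sqrt (div_pos hℓ hA).le]
    field_simp
    ring
  calc |p₀ + t * v₀ + t ^ 2 / 2 * a| ≤ ℓ + h ^ 2 / 8 * Amax :=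
        abs_quadratic_le_of_abs_endpoints_le hh_pos ht hp hp1 ha
    _ = 3 / 2 * ℓ := by rw [herror]; ring

/-- Lemma 3, scalar version. -/
theorem stmt_6 (ℓ Amax Vmax h : ℝ) (hℓ : 0 < ℓ) (hA : 0 < Amax)
    (hV : Vmax = Real.sqrt (ℓ * Amax)) (hh : h = 2 * Real.sqrt (ℓ / Amax))
    (p₀ v₀ a : ℝ)
    (hp : |p₀| ≤ ℓ) (hv : |v₀| ≤ Vmax) (ha : |a| ≤ Amax)
    (hp1 : |p₀ + h * v₀ + h ^ 2 / 2 * a| ≤ ℓ)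
    (hv1 : |v₀ + h * a| ≤ Vmax)
    (t : ℝ) (ht : t ∈ Set.Icc 0 h) :
    |p₀ + t * v₀ + t ^ 2 / 2 * a| ≤ 3 / 2 * ℓ :=
  stmt_6_general ℓ Amax h hℓ hA hh p₀ v₀ a hp ha hp1 t ht
end

section
/- (Lemma 3, axis-aligned vector version.) Let ℓ > 0, A_max > 0, V_max = √(ℓ·A_max), h = 2·√(ℓ/A_max). Let ϖ ∈ ℝ^d, let i be a coordinate index, and set ϖ' = ϖ + ℓ·e_i. Suppose p₀ ∈ Ω(ϖ), ‖v₀‖_∞ ≤ V_max, ‖a‖_∞ ≤ A_max, and the state after one step satisfies p₀ + h·v₀ + (h²/2)·a ∈ Ω(ϖ') and ‖v₀ + h·a‖_∞ ≤ V_max. Then for every t ∈ [0, h] there is a point q on the closed segment joining ϖ and ϖ' such that ‖(p₀ + t·v₀ + (t²/2)·a) − q‖₂ ≤ (3/2)·ℓ·√d; that is, the Euclidean distance from the continuous trajectory to the segment [ϖ, ϖ'] never exceeds (3/2)·ℓ·√d. -/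
/-! The trajectory at time `s * h` differs from the point `(1 - s) • p₀ + s • p₁` of the chord
between its endpoints only by `-(s (1 - s) h² / 2) • a`, of size at most `h² ‖a‖ / 8 = ℓ / 2`.
Since the endpoints lie within `ℓ` of `ϖ` and `ϖ'`, the matching point of `[ϖ, ϖ']` is within
`ℓ + ℓ / 2` of the trajectory in every coordinate, hence within `(3/2) ℓ √d` in the
Euclidean norm. -/

open Set

lemma norm_traj_sub_convexComb_le {E : Type*} [NormedAddCommGroup E] [NormedSpace ℝ E]
    (p v a w w' : E) (h s ℓ : ℝ) (hs : s ∈ Icc 0 1)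
    (hp : ‖p - w‖ ≤ ℓ) (hp₁ : ‖p + h • v + (h ^ 2 / 2) • a - w'‖ ≤ ℓ) :
    ‖p + (s * h) • v + ((s * h) ^ 2 / 2) • a - ((1 - s) • w + s • w')‖
      ≤ ℓ + h ^ 2 / 8 * ‖a‖ := by
  obtain ⟨hs₀, hs₁⟩ := hs
  have hdecomp : p + (s * h) • v + ((s * h) ^ 2 / 2) • a - ((1 - s) • w + s • w') =
      (1 - s) • (p - w) + s • (p + h • v + (h ^ 2 / 2) • a - w') -
        (s * (1 - s) * h ^ 2 / 2) • a := by
    module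
  have hquad : s * (1 - s) ≤ 1 / 4 := by nlinarith [sq_nonneg (s - 1 / 2)]
  rw [hdecomp]
  calc _ ≤ ‖(1 - s) • (p - w)‖ + ‖s • (p + h • v + (h ^ 2 / 2) • a - w')‖ +
        ‖(s * (1 - s) * h ^ 2 / 2) • a‖ := norm_sub_le_of_le (norm_add_le _ _) le_rfl
    _ = (1 - s) * ‖p - w‖ + s * ‖p + h • v + (h ^ 2 / 2) • a - w'‖ +
        s * (1 - s) * h ^ 2 / 2 * ‖a‖ := by
      rw [norm_smul, norm_smul, norm_smul, Real.norm_of_nonneg (by linarith),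
        Real.norm_of_nonneg hs₀, Real.norm_of_nonneg (by have := sq_nonneg h; positivity)]
    _ ≤ (1 - s) * ℓ + s * ℓ + 1 / 4 * h ^ 2 / 2 * ‖a‖ := by
      gcongr
    _ = ℓ + h ^ 2 / 8 * ‖a‖ := by ring

lemma EuclideanSpace.norm_le_mul_sqrt_card {ι : Type*} [Fintype ι] (x : EuclideanSpace ℝ ι)
    {c : ℝ} (hc : 0 ≤ c) (hx : ∀ j, |x j| ≤ c) : ‖x‖ ≤ c * √(Fintype.card ι) := by
  rw [EuclideanSpace.norm_eq]
  calc √(∑ j, ‖x j‖ ^ 2) ≤ √(∑ _j : ι, c ^ 2) := by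
        gcongr with j
        exact hx j
    _ = c * √(Fintype.card ι) := by
      rw [Finset.sum_const, Finset.card_univ, nsmul_eq_mul,
        Real.sqrt_mul (Nat.cast_nonneg _), Real.sqrt_sq hc, mul_comm]

theorem stmt_7_general (d : ℕ) (ℓ Amax h : ℝ) (hℓ : 0 < ℓ) (hA : 0 < Amax)
    (hh : h = 2 * Real.sqrt (ℓ / Amax))
    (ϖ p₀ v₀ a : EuclideanSpace ℝ (Fin d)) (i : Fin d)
    (hp : ∀ j, |p₀ j - ϖ j| ≤ ℓ)
    (ha : ∀ j, |a j| ≤ Amax)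
    (hp1 : ∀ j, |(p₀ + h • v₀ + (h ^ 2 / 2) • a) j -
                  (ϖ + ℓ • EuclideanSpace.single i (1 : ℝ)) j| ≤ ℓ)
    (t : ℝ) (ht : t ∈ Set.Icc 0 h) :
    ∃ q ∈ segment ℝ ϖ (ϖ + ℓ • EuclideanSpace.single i (1 : ℝ)),
      ‖(p₀ + t • v₀ + (t ^ 2 / 2) • a) - q‖ ≤ 3 / 2 * ℓ * Real.sqrt d := by
  set ϖ' := ϖ + ℓ • EuclideanSpace.single i (1 : ℝ)
  have hh₀ : 0 < h := by rw [hh]; positivity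
  have hh_sq : h ^ 2 = 4 * ℓ / Amax := by
    rw [hh, mul_pow, Real.sq_sqrt (div_pos hℓ hA).le]; ring
  set s := t / h
  have hs : s ∈ Icc 0 1 := ⟨div_nonneg ht.1 hh₀.le, div_le_one_of_le₀ ht.2 hh₀.le⟩
  have hts : t = s * h := (div_mul_cancel₀ t hh₀.ne').symm
  refine ⟨(1 - s) • ϖ + s • ϖ', ⟨1 - s, s, by linarith [hs.2], hs.1, by ring, rfl⟩, ?_⟩
  have hcoord : ∀ j, |(p₀ + t • v₀ + (t ^ 2 / 2) • a - ((1 - s) • ϖ + s • ϖ')) j| ≤ 3 / 2 * ℓ := by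
    intro j
    have hacc : h ^ 2 / 8 * |a j| ≤ ℓ / 2 := by
      calc h ^ 2 / 8 * |a j| ≤ h ^ 2 / 8 * Amax := by gcongr; exact ha j
        _ = ℓ / 2 := by rw [hh_sq]; field_simp; ring
    have := norm_traj_sub_convexComb_le (p₀ j) (v₀ j) (a j) (ϖ j) (ϖ' j) h s ℓ hs (hp j)
      (by simpa using hp1 j)
    rw [← hts] at this
    simp only [Real.norm_eq_abs, smul_eq_mul] at this
    simp only [PiLp.sub_apply, PiLp.add_apply, PiLp.smul_apply, smul_eq_mul]
    linarith
  simpa using EuclideanSpace.norm_le_mul_sqrt_card _ (by positivity) hcoord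

/-- Lemma 3, axis-aligned vector version: the continuous
trajectory stays within Euclidean distance (3/2)·ℓ·√d of the segment
joining consecutive waypoints. -/
theorem stmt_7 (d : ℕ) (hd : 1 ≤ d) (ℓ Amax Vmax h : ℝ) (hℓ : 0 < ℓ) (hA : 0 < Amax)
    (hV : Vmax = Real.sqrt (ℓ * Amax)) (hh : h = 2 * Real.sqrt (ℓ / Amax))
    (ϖ p₀ v₀ a : EuclideanSpace ℝ (Fin d)) (i : Fin d)
    (hp : ∀ j, |p₀ j - ϖ j| ≤ ℓ)
    (hv : ∀ j, |v₀ j| ≤ Vmax)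
    (ha : ∀ j, |a j| ≤ Amax)
    (hp1 : ∀ j, |(p₀ + h • v₀ + (h ^ 2 / 2) • a) j -
                  (ϖ + ℓ • EuclideanSpace.single i (1 : ℝ)) j| ≤ ℓ)
    (hv1 : ∀ j, |(v₀ + h • a) j| ≤ Vmax)
    (t : ℝ) (ht : t ∈ Set.Icc 0 h) :
    ∃ q ∈ segment ℝ ϖ (ϖ + ℓ • EuclideanSpace.single i (1 : ℝ)),
      ‖(p₀ + t • v₀ + (t ^ 2 / 2) • a) - q‖ ≤ 3 / 2 * ℓ * Real.sqrt d :=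
  stmt_7_general d ℓ Amax h hℓ hA hh ϖ p₀ v₀ a i hp ha hp1 t ht
end

section
/- (Theorem 1, discrete feasibility for an axis-aligned waypoint sequence.) Let ℓ > 0, A_max > 0, V_max = √(ℓ·A_max), h = 2·√(ℓ/A_max). Let K ≥ 1 and let ϖ : {0, …, K} → ℝ^d be a waypoint sequence satisfying: (a) for every k < K, either ϖ(k+1) = ϖ(k), or ϖ(k+1) = ϖ(k) + ℓ·σ·e_i for some coordinate index i and sign σ ∈ {−1, +1}; (b) for every k with 0 < k < K, if ϖ(k) ≠ ϖ(k−1) and ϖ(k+1) ≠ ϖ(k), then ϖ(k+1) − ϖ(k) = ϖ(k) − ϖ(k−1) (the moving direction can change only across a repeated waypoint); (c) every repeated waypoint is isolated and not terminal: if ϖ(k+1) = ϖ(k) for some k < K, then k + 1 < K, ϖ(k+2) ≠ ϖ(k+1), and if k > 0 then ϖ(k) ≠ ϖ(k−1). Then there exist sequences p, v, a : {0, …, K} → ℝ^d with p(0) = ϖ(0), v(0) = 0, satisfying the discrete dynamics p(k+1) = p(k) + h·v(k) + (h²/2)·a(k) and v(k+1) = v(k) + h·a(k) for all k < K, and such that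 for all k ≤ K: ‖p(k) − ϖ(k)‖_∞ ≤ ℓ, ‖v(k)‖_∞ ≤ V_max, and ‖a(k)‖_∞ ≤ A_max. -/
/-!
Extend `ϖ` to be constant after `K`, so that `‖ϖ (k+1) - ϖ k‖_∞ ≤ ℓ` for all `k`, and take for
`v` the central difference `(ϖ (k+1) - ϖ (k-1)) / (2h)` (with `v 0 = 0`), for `a` the forward
difference of `v` divided by `h`, and for `p` the trapezoidal integral of `v`. Then
`‖v‖_∞ ≤ ℓ / h = V_max / 2`, `‖a‖_∞ ≤ 2ℓ / h² = A_max / 2`, and `p` is a weighted average of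
neighbouring waypoints shifted by `(ϖ 0 - ϖ 1) / 2`, hence within `ℓ` of `ϖ`.
-/

noncomputable section

namespace WaypointTracking

variable {E : Type*}

section Module

variable [AddCommGroup E] [Module ℝ E]

def centralVelocity (h : ℝ) (w : ℕ → E) : ℕ → E
  | 0 => 0
  | k + 1 => (2 * h)⁻¹ • (w (k + 2) - w k)

def forwardAccel (h : ℝ) (w : ℕ → E) (k : ℕ) : E :=
  h⁻¹ • (centralVelocity h w (k + 1) - centralVelocity h w k)

/-- Closed form of `w 0 + ∑ i < k, (h / 2) • (centralVelocity h w i + centralVelocity h w (i + 1))`. -/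
def trapezoidPosition (w : ℕ → E) : ℕ → E
  | 0 => w 0
  | k + 1 => (4 : ℝ)⁻¹ • (w (k + 2) + (2 : ℝ) • w (k + 1) + w k) + (2 : ℝ)⁻¹ • (w 0 - w 1)

variable {h : ℝ} (w : ℕ → E)

theorem centralVelocity_succ_eq_add (hh : h ≠ 0) (k : ℕ) :
    centralVelocity h w (k + 1) = centralVelocity h w k + h • forwardAccel h w k := by
  rw [forwardAccel, smul_smul, mul_inv_cancel₀ hh, one_smul, add_sub_cancel]

theorem trapezoidPosition_succ_eq_add (hh : h ≠ 0) (k : ℕ) :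
    trapezoidPosition w (k + 1) = trapezoidPosition w k + h • centralVelocity h w k +
      (h ^ 2 / 2) • forwardAccel h w k := by
  rcases k with _ | k <;>
  · simp only [trapezoidPosition, forwardAccel, centralVelocity]
    match_scalars <;> field_simp <;> ring

end Module

section Normed

variable [SeminormedAddCommGroup E] [NormedSpace ℝ E] {h ℓ : ℝ} {w : ℕ → E}

theorem norm_centralVelocity_le (hh : 0 < h) (hw : ∀ k, ‖w (k + 1) - w k‖ ≤ ℓ) (k : ℕ) :
    ‖centralVelocity h w k‖ ≤ ℓ / h := by
  have hℓ : 0 ≤ ℓ := (norm_nonneg _).trans (hw 0)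
  rcases k with _ | k
  · simpa [centralVelocity] using div_nonneg hℓ hh.le
  · have hdiff : ‖w (k + 2) - w k‖ ≤ 2 * ℓ := by
      calc ‖w (k + 2) - w k‖ = ‖(w (k + 2) - w (k + 1)) + (w (k + 1) - w k)‖ := by
            rw [sub_add_sub_cancel]
        _ ≤ ℓ + ℓ := norm_add_le_of_le (hw (k + 1)) (hw k)
        _ = 2 * ℓ := by ring
    calc ‖centralVelocity h w (k + 1)‖ = (2 * h)⁻¹ * ‖w (k + 2) - w k‖ := by
          rw [centralVelocity, norm_smul, Real.norm_of_nonneg (by positivity)]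
      _ ≤ (2 * h)⁻¹ * (2 * ℓ) := by gcongr
      _ = ℓ / h := by field_simp

theorem norm_forwardAccel_le (hh : 0 < h) (hw : ∀ k, ‖w (k + 1) - w k‖ ≤ ℓ) (k : ℕ) :
    ‖forwardAccel h w k‖ ≤ 2 * ℓ / h ^ 2 := by
  calc ‖forwardAccel h w k‖ = h⁻¹ * ‖centralVelocity h w (k + 1) - centralVelocity h w k‖ := by
        rw [forwardAccel, norm_smul, Real.norm_of_nonneg (by positivity)]
    _ ≤ h⁻¹ * (ℓ / h + ℓ / h) := by
        gcongr
        exact norm_sub_le_of_le (norm_centralVelocity_le hh hw _) (norm_centralVelocity_le hh hw _)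
    _ = 2 * ℓ / h ^ 2 := by field_simp; ring

theorem norm_trapezoidPosition_sub_le (hw : ∀ k, ‖w (k + 1) - w k‖ ≤ ℓ) (k : ℕ) :
    ‖trapezoidPosition w k - w k‖ ≤ ℓ := by
  rcases k with _ | k
  · simpa [trapezoidPosition] using (norm_nonneg _).trans (hw 0)
  · have hsplit : trapezoidPosition w (k + 1) - w (k + 1) =
        (4 : ℝ)⁻¹ • ((w (k + 2) - w (k + 1)) - (w (k + 1) - w k)) - (2 : ℝ)⁻¹ • (w 1 - w 0) := by
      simp only [trapezoidPosition]
      module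
    calc ‖trapezoidPosition w (k + 1) - w (k + 1)‖
        ≤ (4 : ℝ)⁻¹ * (ℓ + ℓ) + (2 : ℝ)⁻¹ * ℓ := by
          rw [hsplit]
          refine norm_sub_le_of_le ?_ ?_ <;> rw [norm_smul, Real.norm_of_nonneg (by norm_num)]
          · gcongr
            exact norm_sub_le_of_le (hw (k + 1)) (hw k)
          · gcongr
            exact hw 0
      _ = ℓ := by ring

end Normed

theorem norm_comp_min_succ_sub_le [SeminormedAddCommGroup E] {w : ℕ → E} {K : ℕ} {ℓ : ℝ}
    (hℓ : 0 ≤ ℓ) (hw : ∀ k < K, ‖w (k + 1) - w k‖ ≤ ℓ) (k : ℕ) :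
    ‖w (min (k + 1) K) - w (min k K)‖ ≤ ℓ := by
  rcases lt_or_ge k K with hk | hk
  · rw [min_eq_left hk, min_eq_left hk.le]
    exact hw k hk
  · rw [min_eq_right (by omega), min_eq_right hk, sub_self, norm_zero]
    exact hℓ

theorem norm_ofLp_sub_le_of_axis_step {d : ℕ} {ℓ : ℝ} (hℓ : 0 ≤ ℓ)
    {x y : EuclideanSpace ℝ (Fin d)} (hy : y = x ∨ ∃ (i : Fin d) (σ : ℝ), (σ = 1 ∨ σ = -1) ∧
      y = x + (ℓ * σ) • EuclideanSpace.single i (1 : ℝ)) :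
    ‖WithLp.ofLp y - WithLp.ofLp x‖ ≤ ℓ := by
  obtain rfl | ⟨i, σ, hσ, rfl⟩ := hy
  · simpa using hℓ
  · have hσ' : |σ| = 1 := by rcases hσ with rfl | rfl <;> simp
    rw [WithLp.ofLp_add, add_sub_cancel_left, WithLp.ofLp_smul, PiLp.ofLp_single, norm_smul,
      Pi.norm_single, norm_one, mul_one, Real.norm_eq_abs, abs_mul, hσ', mul_one,
      abs_of_nonneg hℓ]

section Constants

variable {ℓ A : ℝ} (hℓ : 0 < ℓ) (hA : 0 < A)
include hℓ hA

theorem div_two_mul_sqrt_div_eq : ℓ / (2 * √(ℓ / A)) = √(ℓ * A) / 2 := by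
  have hroot : √(ℓ / A) * √(ℓ * A) = ℓ := by
    rw [← Real.sqrt_mul (by positivity), show ℓ / A * (ℓ * A) = ℓ * ℓ by field_simp,
      Real.sqrt_mul_self hℓ.le]
  have : 0 < √(ℓ / A) := by positivity
  field_simp
  linarith

theorem two_mul_div_two_mul_sqrt_div_sq_eq : 2 * ℓ / (2 * √(ℓ / A)) ^ 2 = A / 2 := by
  rw [mul_pow, Real.sq_sqrt (by positivity)]
  field_simp

end Constants

end WaypointTracking

end

open WaypointTracking

theorem stmt_8_general (d : ℕ) (ℓ Amax Vmax h : ℝ) (hℓ : 0 < ℓ) (hA : 0 < Amax)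
    (hV : Vmax = Real.sqrt (ℓ * Amax)) (hh : h = 2 * Real.sqrt (ℓ / Amax))
    (K : ℕ) (ϖ : ℕ → EuclideanSpace ℝ (Fin d))
    -- (a): each step is either a repeat or an ℓ-step along a signed coordinate direction
    (hstep : ∀ k < K, ϖ (k + 1) = ϖ k ∨
      ∃ (i : Fin d) (σ : ℝ), (σ = 1 ∨ σ = -1) ∧
        ϖ (k + 1) = ϖ k + (ℓ * σ) • EuclideanSpace.single i (1 : ℝ)) :
    ∃ p v a : ℕ → EuclideanSpace ℝ (Fin d),
      p 0 = ϖ 0 ∧ v 0 = 0 ∧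
      (∀ k < K, p (k + 1) = p k + h • v k + (h ^ 2 / 2) • a k ∧
                v (k + 1) = v k + h • a k) ∧
      (∀ k ≤ K, (∀ j, |(p k - ϖ k) j| ≤ ℓ) ∧
                (∀ j, |v k j| ≤ Vmax) ∧
                (∀ j, |a k j| ≤ Amax)) := by
  have hh0 : 0 < h := by rw [hh]; positivity
  -- `ofLp` forgets the Euclidean structure, so `w k` carries the sup norm
  set w : ℕ → (Fin d → ℝ) := fun k => WithLp.ofLp (ϖ (min k K)) 
  have hw : ∀ k, ‖w (k + 1) - w k‖ ≤ ℓ :=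
    norm_comp_min_succ_sub_le (w := fun k => WithLp.ofLp (ϖ k)) hℓ.le fun k hk => norm_ofLp_sub_le_of_axis_step hℓ.le (hstep k hk)
  refine ⟨fun k => WithLp.toLp 2 (trapezoidPosition w k),
    fun k => WithLp.toLp 2 (centralVelocity h w k), fun k => WithLp.toLp 2 (forwardAccel h w k),
    by simp [trapezoidPosition, w], by simp [centralVelocity], fun k _ => ?_, fun k hk => ?_⟩
  · beta_reduce
    rw [trapezoidPosition_succ_eq_add w hh0.ne', centralVelocity_succ_eq_add w hh0.ne']
    simp
  · have hwk : w k = WithLp.ofLp (ϖ k) := by simp [w, min_eq_left hk]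
    refine ⟨fun j => ?_, fun j => ?_, fun j => ?_⟩
    · calc |(WithLp.toLp 2 (trapezoidPosition w k) - ϖ k) j|
          = ‖(trapezoidPosition w k - w k) j‖ := by simp [hwk]
        _ ≤ ‖trapezoidPosition w k - w k‖ := norm_le_pi_norm _ j
        _ ≤ ℓ := norm_trapezoidPosition_sub_le hw k
    · calc |WithLp.toLp 2 (centralVelocity h w k) j| = ‖centralVelocity h w k j‖ := rfl
        _ ≤ ‖centralVelocity h w k‖ := norm_le_pi_norm _ j
        _ ≤ ℓ / h := norm_centralVelocity_le hh0 hw k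
        _ = Vmax / 2 := by rw [hV, hh, div_two_mul_sqrt_div_eq hℓ hA]
        _ ≤ Vmax := half_le_self (by rw [hV]; positivity)
    · calc |WithLp.toLp 2 (forwardAccel h w k) j| = ‖forwardAccel h w k j‖ := rfl
        _ ≤ ‖forwardAccel h w k‖ := norm_le_pi_norm _ j
        _ ≤ 2 * ℓ / h ^ 2 := norm_forwardAccel_le hh0 hw k
        _ = Amax / 2 := by rw [hh, two_mul_div_two_mul_sqrt_div_sq_eq hℓ hA]
        _ ≤ Amax := half_le_self hA.le

/-- Theorem 1, discrete feasibility for an axis-aligned waypoint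
sequence. -/
theorem stmt_8 (d : ℕ) (hd : 1 ≤ d) (ℓ Amax Vmax h : ℝ) (hℓ : 0 < ℓ) (hA : 0 < Amax)
    (hV : Vmax = Real.sqrt (ℓ * Amax)) (hh : h = 2 * Real.sqrt (ℓ / Amax))
    (K : ℕ) (hK : 1 ≤ K) (ϖ : ℕ → EuclideanSpace ℝ (Fin d))
    -- (a): each step is either a repeat or an ℓ-step along a signed coordinate direction
    (hstep : ∀ k < K, ϖ (k + 1) = ϖ k ∨
      ∃ (i : Fin d) (σ : ℝ), (σ = 1 ∨ σ = -1) ∧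
        ϖ (k + 1) = ϖ k + (ℓ * σ) • EuclideanSpace.single i (1 : ℝ))
    -- (b): the moving direction can change only across a repeated waypoint
    (hdir : ∀ m, m + 1 < K → ϖ (m + 1) ≠ ϖ m → ϖ (m + 2) ≠ ϖ (m + 1) →
      ϖ (m + 2) - ϖ (m + 1) = ϖ (m + 1) - ϖ m)
    -- (c): every repeated waypoint is isolated and not terminal
    (hrep : ∀ k < K, ϖ (k + 1) = ϖ k →
      k + 1 < K ∧ ϖ (k + 2) ≠ ϖ (k + 1) ∧ (0 < k → ϖ k ≠ ϖ (k - 1))) :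
    ∃ p v a : ℕ → EuclideanSpace ℝ (Fin d),
      p 0 = ϖ 0 ∧ v 0 = 0 ∧
      (∀ k < K, p (k + 1) = p k + h • v k + (h ^ 2 / 2) • a k ∧
                v (k + 1) = v k + h • a k) ∧
      (∀ k ≤ K, (∀ j, |(p k - ϖ k) j| ≤ ℓ) ∧
                (∀ j, |v k j| ≤ Vmax) ∧
                (∀ j, |a k j| ≤ Amax)) :=
  stmt_8_general d ℓ Amax Vmax h hℓ hA hV hh K ϖ hstep
end

section
/- (Ellipsoid sampling map covers only the informed set.) Let d ≥ 1, let p_start, p_goal ∈ ℝ^d with p_start ≠ p_goal, set c_min = ‖p_goal − p_start‖₂ and x_centre = (p_start + p_goal)/2, and let c_best ≥ c_min. Let L be the d × d diagonal matrix with first diagonal entry c_best/2 and all remaining diagonal entries √(c_best² − c_min²)/2, and let C be an orthogonal d × d matrix with determinant 1 mapping the first standard basis vector e₁ to the unit vector (p_goal − p_start)/c_min. Then for every u ∈ ℝ^d with ‖u‖₂ ≤ 1, the point x = C·L·u + x_centre satisfies ‖p_start − x‖₂ + ‖x − p_goal‖₂ ≤ c_best; i.e., the image of the closed unit ball under the map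 u ↦ C·L·u + x_centre is contained in χ_inform = {x ∈ ℝ^d : ‖p_start − x‖₂ + ‖x − p_goal‖₂ ≤ c_best}. -/
/-!
The point `x` sits at `C (L u)` from the centre, and `C e₁` is the unit vector from `p_start`
to `p_goal`, so the foci are `x_centre ∓ c C e₁` with `c = c_min / 2`. As `C` is an isometry,
the two focal distances are `‖L u ± c e₁‖`. Writing `u = p e₁ + w` with `w ⟂ e₁`, Pythagoras and
`b² = a² - c²` (`a = c_best / 2`, `b` the minor semi-axis) give
`‖L u ± c e₁‖² = (a ± c p)² - b² (1 - ‖u‖²) ≤ (a ± c p)²`, and the two bounds add up to `2 a`.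
-/

open scoped Matrix RealInnerProductSpace

section Ellipsoid

variable {E : Type*} [NormedAddCommGroup E] [InnerProductSpace ℝ E]

/-- The stretch by `a` along the unit vector `e` and by `b` on `e`'s orthogonal complement,
i.e. the paper's `L` written without coordinates. -/
def ellipsoidMap (e : E) (a b : ℝ) (u : E) : E :=
  (a * ⟪e, u⟫) • e + b • (u - ⟪e, u⟫ • e)

lemma norm_ellipsoidMap_add_smul_le {e u : E} (he : ‖e‖ = 1) (hu : ‖u‖ ≤ 1)
    {a b c : ℝ} (ha : 0 ≤ a) (habc : b ^ 2 + c ^ 2 = a ^ 2) :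
    ‖ellipsoidMap e a b u + c • e‖ ≤ a + c * ⟪e, u⟫ := by
  set p := ⟪e, u⟫
  set w := u - p • e
  have hew : ⟪e, w⟫ = 0 := by
    simp [w, p, inner_sub_right, real_inner_smul_right, he]
  have pythagoras : ∀ s t : ℝ, ‖s • e + t • w‖ ^ 2 = s ^ 2 + t ^ 2 * ‖w‖ ^ 2 := by
    intro s t
    have h := norm_add_sq_eq_norm_sq_add_norm_sq_real (x := s • e) (y := t • w)
      (by simp [real_inner_smul_left, real_inner_smul_right, hew])
    simp only [norm_smul, he, Real.norm_eq_abs] at h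
    nlinarith [sq_abs s, sq_abs t]
  have hu' : p ^ 2 + ‖w‖ ^ 2 ≤ 1 := by
    have hu2 := pythagoras p 1
    rw [one_smul, show p • e + w = u by simp [w]] at hu2
    linarith [pow_le_one₀ (n := 2) (norm_nonneg u) hu]
  have hp : |p| ≤ 1 := (abs_real_inner_le_norm e u).trans (by rw [he, one_mul]; exact hu)
  have hc : |c| ≤ a := abs_le_of_sq_le_sq (by nlinarith [sq_nonneg b]) ha
  have hcp : |c * p| ≤ a := by
    rw [abs_mul]
    exact (mul_le_mul hc hp (abs_nonneg p) ha).trans_eq (mul_one a)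
  have hsplit : ellipsoidMap e a b u + c • e = (a * p + c) • e + b • w := by
    simp only [ellipsoidMap, add_smul]; abel
  rw [hsplit]
  refine (pow_le_pow_iff_left₀ (norm_nonneg _) (by linarith [neg_abs_le (c * p)])
    two_ne_zero).mp ?_
  calc ‖(a * p + c) • e + b • w‖ ^ 2 = (a * p + c) ^ 2 + b ^ 2 * ‖w‖ ^ 2 := pythagoras _ _
    _ ≤ (a * p + c) ^ 2 + b ^ 2 * (1 - p ^ 2) := by gcongr; linarith
    _ = (a + c * p) ^ 2 := by linear_combination (1 - p ^ 2) * habc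

lemma norm_ellipsoidMap_add_smul_add_norm_sub_smul_le {e u : E} (he : ‖e‖ = 1) (hu : ‖u‖ ≤ 1)
    {a b c : ℝ} (ha : 0 ≤ a) (habc : b ^ 2 + c ^ 2 = a ^ 2) :
    ‖ellipsoidMap e a b u + c • e‖ + ‖ellipsoidMap e a b u - c • e‖ ≤ 2 * a := by
  have hplus := norm_ellipsoidMap_add_smul_le he hu ha habc
  have hminus := norm_ellipsoidMap_add_smul_le (b := b) (c := -c) he hu ha (by rwa [neg_sq])
  rw [neg_smul, ← sub_eq_add_neg] at hminus
  linarith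

end Ellipsoid

lemma toLp_diagonal_ite_mulVec {ι : Type*} [Fintype ι] [DecidableEq ι] (i₀ : ι) (a b : ℝ)
    (u : EuclideanSpace ℝ ι) :
    WithLp.toLp 2 (Matrix.diagonal (fun i => if i = i₀ then a else b) *ᵥ u.ofLp)
      = ellipsoidMap (EuclideanSpace.single i₀ 1) a b u := by
  ext i
  by_cases hi : i = i₀
  · subst hi; simp [ellipsoidMap, Matrix.mulVec_diagonal, EuclideanSpace.inner_single_left]
  · simp [ellipsoidMap, Matrix.mulVec_diagonal, EuclideanSpace.inner_single_left, hi]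

lemma EuclideanSpace.norm_smul_eq_of_forall_apply_eq_div {ι : Type*} [Fintype ι]
    {v w : EuclideanSpace ℝ ι} (h : ∀ i, v i = w i / ‖w‖) : ‖w‖ • v = w := by
  rcases (norm_nonneg w).eq_or_lt with hw | hw
  · obtain rfl : w = 0 := norm_eq_zero.mp hw.symm
    simp
  · ext i
    rw [PiLp.smul_apply, h i, smul_eq_mul, mul_div_cancel₀ _ hw.ne']

lemma Matrix.norm_toEuclideanCLM_of_mem_unitaryGroup {𝕜 n : Type*} [RCLike 𝕜] [Fintype n]
    [DecidableEq n] {A : Matrix n n 𝕜} (hA : A ∈ Matrix.unitaryGroup n 𝕜)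
    (x : EuclideanSpace 𝕜 n) : ‖Matrix.toEuclideanCLM (n := n) (𝕜 := 𝕜) A x‖ = ‖x‖ :=
  ContinuousLinearMap.norm_map_of_mem_unitary (Unitary.map_mem _ hA) x

theorem stmt_12_general (d : ℕ) (hd : 0 < d)
    (pstart pgoal : EuclideanSpace ℝ (Fin d))
    (cmin cbest : ℝ) (hcmin : cmin = ‖pgoal - pstart‖) (hcb : cmin ≤ cbest)
    (xcentre : EuclideanSpace ℝ (Fin d))
    (hxc : xcentre = (2 : ℝ)⁻¹ • (pstart + pgoal))
    (L C : Matrix (Fin d) (Fin d) ℝ)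
    (hL : L = Matrix.diagonal (fun i =>
      if i = (⟨0, hd⟩ : Fin d) then cbest / 2
      else Real.sqrt (cbest ^ 2 - cmin ^ 2) / 2))
    (hC : C ∈ Matrix.orthogonalGroup (Fin d) ℝ)
    (hCe : ∀ i, C.mulVec (Pi.single (⟨0, hd⟩ : Fin d) (1 : ℝ)) i
      = (pgoal - pstart) i / cmin)
    (u : EuclideanSpace ℝ (Fin d)) (hu : ‖u‖ ≤ 1)
    (x : EuclideanSpace ℝ (Fin d))
    (hx : ∀ i, x i = C.mulVec (L.mulVec (fun j => u j)) i + xcentre i) :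
    ‖pstart - x‖ + ‖x - pgoal‖ ≤ cbest := by
  set e := EuclideanSpace.single (⟨0, hd⟩ : Fin d) (1 : ℝ)
  set U := Matrix.toEuclideanCLM (n := Fin d) (𝕜 := ℝ) C
  set v := ellipsoidMap e (cbest / 2) (Real.sqrt (cbest ^ 2 - cmin ^ 2) / 2) u
  have hcmin₀ : 0 ≤ cmin := hcmin ▸ norm_nonneg _
  have hLu : WithLp.toLp 2 (L *ᵥ u.ofLp) = v := by
    rw [hL]
    exact toLp_diagonal_ite_mulVec _ _ _ u
  have hx' : x = U v + xcentre := by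
    ext i
    rw [hx, PiLp.add_apply, ← hLu]
    rfl
  have hUe : cmin • U e = pgoal - pstart := by
    subst hcmin
    exact EuclideanSpace.norm_smul_eq_of_forall_apply_eq_div fun i => by simpa [U, e] using hCe i
  have hhalf : (cmin / 2) • U e = (2 : ℝ)⁻¹ • (pgoal - pstart) := by
    rw [div_eq_inv_mul, mul_smul, hUe]
  have hstart : pstart - x = -U (v + (cmin / 2) • e) := by
    rw [hx', hxc, map_add, map_smul, hhalf]
    module
  have hgoal : x - pgoal = U (v - (cmin / 2) • e) := by
    rw [hx', hxc, map_sub, map_smul, hhalf]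
    module
  rw [hstart, hgoal, norm_neg, Matrix.norm_toEuclideanCLM_of_mem_unitaryGroup hC,
    Matrix.norm_toEuclideanCLM_of_mem_unitaryGroup hC]
  have habc : (Real.sqrt (cbest ^ 2 - cmin ^ 2) / 2) ^ 2 + (cmin / 2) ^ 2 = (cbest / 2) ^ 2 := by
    rw [div_pow, Real.sq_sqrt (by nlinarith)]; ring
  calc _ ≤ 2 * (cbest / 2) :=
        norm_ellipsoidMap_add_smul_add_norm_sub_smul_le
          ((PiLp.norm_single _ _ _ _).trans norm_one) hu (by linarith) habc
    _ = cbest := by ring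

/-- the ellipsoid sampling map u ↦ C·L·u + x_centre sends the
closed unit ball into the informed set χ_inform. -/
theorem stmt_12 (d : ℕ) (hd : 0 < d)
    (pstart pgoal : EuclideanSpace ℝ (Fin d)) (hne : pstart ≠ pgoal)
    (cmin cbest : ℝ) (hcmin : cmin = ‖pgoal - pstart‖) (hcb : cmin ≤ cbest)
    (xcentre : EuclideanSpace ℝ (Fin d))
    (hxc : xcentre = (2 : ℝ)⁻¹ • (pstart + pgoal))
    (L C : Matrix (Fin d) (Fin d) ℝ)
    (hL : L = Matrix.diagonal (fun i =>
      if i = (⟨0, hd⟩ : Fin d) then cbest / 2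
      else Real.sqrt (cbest ^ 2 - cmin ^ 2) / 2))
    (hC : C ∈ Matrix.orthogonalGroup (Fin d) ℝ) (hdet : C.det = 1)
    (hCe : ∀ i, C.mulVec (Pi.single (⟨0, hd⟩ : Fin d) (1 : ℝ)) i
      = (pgoal - pstart) i / cmin)
    (u : EuclideanSpace ℝ (Fin d)) (hu : ‖u‖ ≤ 1)
    (x : EuclideanSpace ℝ (Fin d))
    (hx : ∀ i, x i = C.mulVec (L.mulVec (fun j => u j)) i + xcentre i) :
    ‖pstart - x‖ + ‖x - pgoal‖ ≤ cbest :=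
  stmt_12_general d hd pstart pgoal cmin cbest hcmin hcb xcentre hxc L C hL hC hCe u hu x hx
end
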